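/- Let d ≥ 5 and 0 < α < α_#. Then E_α[Cap(C_0 ∪ {0})] < ∞, and the contribution of large clusters vanishes: lim_{K→∞} E_α[ Cap(C_0 ∪ {0}) · 1{(C_0 ∪ {0}) ∩ ∂B_K ≠ ∅} ] = 0. -/

import Mathlib

open MeasureTheory Filter Set ProbabilityTheory Asymptotics
open scoped ENNReal NNReal Topology

noncomputable section

/-- A lattice point of `ℤ^d`. -/
abbrev Zd (d : ℕ) : Type := Fin d → ℤ

/-- The Euclidean norm of a lattice point. -/
def nrm {d : ℕ} (x : Zd d) : ℝ := Real.sqrt (∑ i, ((x i : ℝ)) ^ 2)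

/-- Two lattice points are nearest neighbors if their Euclidean distance is `1`. -/
def isNN {d : ℕ} (x y : Zd d) : Prop := nrm (x - y) = 1

/-- The Euclidean ball of radius `r` around the origin. -/
def ball (d : ℕ) (r : ℝ) : Set (Zd d) := {x | nrm x ≤ r}

/-- The inner vertex boundary `∂K = {x ∈ K : dist(x, K^c) = 1}`. -/
def bdry {d : ℕ} (K : Set (Zd d)) : Set (Zd d) :=
  {x | x ∈ K ∧ ∃ y, y ∉ K ∧ isNN x y}

/-- The Euclidean diameter of a set of lattice points. -/
def sDiam {d : ℕ} (K : Set (Zd d)) : ℝ :=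
  sSup {r | ∃ x ∈ K, ∃ y ∈ K, r = nrm (x - y)}

/-- The Euclidean distance between two sets of lattice points. -/
def sDist {d : ℕ} (K L : Set (Zd d)) : ℝ :=
  sInf {r | ∃ x ∈ K, ∃ y ∈ L, r = nrm (x - y)}

/-- A finite nearest-neighbor loop on `ℤ^d`: a function `{0,…,len} → ℤ^d`
(frozen after time `len`) with `len ≥ 1`, taking nearest-neighbor steps and
returning to its starting point. -/
structure Loop (d : ℕ) where
  len : ℕ
  len_pos : 0 < len
  path : ℕ → Zd d
  closed : path len = path 0
  nn : ∀ k < len, isNN (path (k + 1)) (path k)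
  frozen : ∀ k, len ≤ k → path k = path len

/-- The range `R(ω)` of a loop. -/
def Loop.range {d : ℕ} (ω : Loop d) : Set (Zd d) := {x | ∃ k ≤ ω.len, ω.path k = x}

/-- The Euclidean diameter of a loop. -/
def Loop.diam {d : ℕ} (ω : Loop d) : ℝ := sDiam ω.range

instance (d : ℕ) : MeasurableSpace (Loop d) := ⊤

/-- The loop measure `μ`, giving a loop of duration `n` mass `(1/n)(1/(2d))^n`. -/
def loopMeasure (d : ℕ) : Measure (Loop d) :=
  Measure.sum fun ω : Loop d =>
    ((ω.len : ℝ≥0∞)⁻¹ * ((2 * d : ℝ≥0∞))⁻¹ ^ ω.len) • Measure.dirac ω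

/-- A configuration of the loop soup: the multiplicity of each loop. -/
abbrev Config (d : ℕ) : Type := Loop d → ℕ

/-- The edge `{x,y}` is traversed by the loop `ω`. -/
def Loop.traverses {d : ℕ} (ω : Loop d) (x y : Zd d) : Prop :=
  ∃ k < ω.len, (ω.path k = x ∧ ω.path (k + 1) = y) ∨ (ω.path k = y ∧ ω.path (k + 1) = x)

/-- The edge `{x,y}` is open in `η`, using only loops satisfying `Q`. -/
def openEdgeVia {d : ℕ} (η : Config d) (Q : Loop d → Prop) (x y : Zd d) : Prop :=
  ∃ ω : Loop d, 0 < η ω ∧ Q ω ∧ ω.traverses x y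

/-- `A` is connected to `B` by a nearest-neighbor path of edges that are open
in `η`, using only loops satisfying `Q`. -/
def connectsVia {d : ℕ} (η : Config d) (Q : Loop d → Prop) (A B : Set (Zd d)) : Prop :=
  ∃ (p : ℕ → Zd d) (n : ℕ), p 0 ∈ A ∧ p n ∈ B ∧
    ∀ k < n, openEdgeVia η Q (p k) (p (k + 1))

/-- `A ↔ B`: `A` is connected to `B` by a path of open edges of `η`. -/
def connects {d : ℕ} (η : Config d) (A B : Set (Zd d)) : Prop :=
  connectsVia η (fun _ => True) A B

/-- The cluster of `x`: all vertices joined to `x` by a (nontrivial) open path. -/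
def cluster {d : ℕ} (η : Config d) (x : Zd d) : Set (Zd d) :=
  {y | ∃ (p : ℕ → Zd d) (n : ℕ), 0 < n ∧ p 0 = x ∧ p n = y ∧
    ∀ k < n, openEdgeVia η (fun _ => True) (p k) (p (k + 1))}

/-- The intensity `α μ(ω)` of a loop for the loop soup with activity `α`. -/
def loopIntensity (d : ℕ) (α : ℝ) (ω : Loop d) : ℝ≥0 :=
  α.toNNReal * (ω.len : ℝ≥0)⁻¹ * ((2 * d : ℝ≥0))⁻¹ ^ ω.len

/-- `P` is the loop soup with activity `α`: the Poisson point process with intensity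
`α μ`, i.e. the multiplicities of the loops are independent Poisson random variables
with means `α μ(ω)`. -/
def IsLoopSoup (d : ℕ) (α : ℝ) (P : Measure (Config d)) : Prop :=
  IsProbabilityMeasure P ∧
  iIndepFun (fun (ω : Loop d) (η : Config d) => η ω) P ∧
  ∀ ω : Loop d, P.map (fun η => η ω) = poissonMeasure (loopIntensity d α ω)

/-- The expected number of vertices in the cluster of the origin, `E_α[#C_0]`. -/
def expectedClusterSize (d : ℕ) (α : ℝ) : ℝ≥0∞ :=
  ⨆ (P : Measure (Config d)) (_ : IsLoopSoup d α P),
    ∫⁻ η, ((cluster η 0).encard : ℝ≥0∞) ∂P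

/-- The critical value `α_# = sup{α > 0 : E_α[#C_0] < ∞}`. -/
def alphaSharp (d : ℕ) : ℝ :=
  sSup {α : ℝ | 0 < α ∧ expectedClusterSize d α < ⊤}

/-- Frozen nearest-neighbor paths of duration `n` started at `x`. -/
def FinPaths (d n : ℕ) (x : Zd d) : Set (ℕ → Zd d) :=
  {f | f 0 = x ∧ (∀ k < n, isNN (f (k + 1)) (f k)) ∧ ∀ k, n ≤ k → f k = f n}

/-- The expectation `E_x[g ∘ (first n steps)]` for simple random walk started at `x`:
each of the `(2d)^n` nearest-neighbor paths of duration `n` has probability `(2d)^{-n}`. -/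
def walkE (d n : ℕ) (x : Zd d) (g : (ℕ → Zd d) → ℝ≥0∞) : ℝ≥0∞ :=
  ∑' f : FinPaths d n x, ((2 * d : ℝ≥0∞))⁻¹ ^ n * g f

/-- The probability `P_x(A)` of an event depending on the first `n` steps of
simple random walk started at `x`. -/
def walkP (d n : ℕ) (x : Zd d) (A : Set (ℕ → Zd d)) : ℝ≥0∞ :=
  walkE d n x (A.indicator 1)

/-- The escape probability `Es_K(x) = P_x(ω(n) ∉ K for all n ≥ 1)`. -/
def Es (d : ℕ) (K : Set (Zd d)) (x : Zd d) : ℝ :=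
  ⨅ n : ℕ, (walkP d n x {f | ∀ k, 1 ≤ k → k ≤ n → f k ∉ K}).toReal

/-- The capacity `Cap(K) = ∑_{x ∈ K} Es_K(x)`. -/
def cap (d : ℕ) (K : Set (Zd d)) : ℝ := ∑' x : K, Es d K x

/-- The capacity, valued in `ℝ≥0∞`. -/
def capE (d : ℕ) (K : Set (Zd d)) : ℝ≥0∞ := ∑' x : K, ENNReal.ofReal (Es d K x)

/-- The alternating stopping times: `τ_0 = 0`, `τ_{2n+1} = inf{t > τ_{2n} : f t ∈ S}`,
`τ_{2n+2} = inf{t > τ_{2n+1} : f t ∈ T}`. -/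
def tauSeq {d : ℕ} (S T : Set (Zd d)) (f : ℕ → Zd d) : ℕ → ℕ∞
  | 0 => 0
  | j + 1 => sInf ((fun t : ℕ => (t : ℕ∞)) ''
      {t : ℕ | tauSeq S T f j < (t : ℕ∞) ∧ f t ∈ (if Even j then S else T)})

/-- The number of distinct points visited by `f` up to time `t`. -/
def rangeCard {d : ℕ} (f : ℕ → Zd d) (t : ℕ) : ℕ := ({y | ∃ k ≤ t, f k = y}).ncard

/-- The constant `C_d = dΓ(d/2)/((d−2)π^{d/2})` in the Green's function asymptotics. -/
def Cd (d : ℕ) : ℝ :=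
  d * Real.Gamma (d / 2) / ((d - 2) * Real.pi ^ ((d : ℝ) / 2))

noncomputable instance (d : ℕ) : DecidableEq (Loop d) := Classical.decEq _

/-- The configuration `η ∖ ω` obtained by removing one copy of the loop `ω` from `η`. -/
def removeLoop {d : ℕ} (η : Config d) (ω : Loop d) : Config d :=
  Function.update η ω (η ω - 1)

end

section LSP

open MeasurableSpace

variable {d : ℕ}

/-! ### Geometry of `nrm` -/

private def emb {d : ℕ} (x : Zd d) : EuclideanSpace ℝ (Fin d) := WithLp.toLp 2 (fun i => (x i : ℝ))

private lemma nrm_eq_norm (x : Zd d) : nrm x = ‖emb x‖ := by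
  rw [EuclideanSpace.norm_eq, nrm]
  congr 1
  refine Finset.sum_congr rfl fun i _ => ?_
  rw [Real.norm_eq_abs, sq_abs]; rfl

private lemma emb_sub (x y : Zd d) : emb (x - y) = emb x - emb y := by
  ext i; simp [emb, Pi.sub_apply]

private lemma nrm_zero' : nrm (0 : Zd d) = 0 := by
  rw [nrm_eq_norm]
  have : emb (0 : Zd d) = 0 := by ext i; simp [emb]
  rw [this, norm_zero]

private lemma nrm_sub_abs (x y : Zd d) : |nrm x - nrm y| ≤ nrm (x - y) := by
  rw [nrm_eq_norm, nrm_eq_norm, nrm_eq_norm, emb_sub]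
  exact abs_norm_sub_norm_le _ _

private lemma nrm_sub_comm (x y : Zd d) : nrm (x - y) = nrm (y - x) := by
  rw [nrm_eq_norm, nrm_eq_norm, emb_sub, emb_sub, ← norm_neg, neg_sub]

/-! ### Countability of loops -/

instance : Countable (Loop d) := by
  have : Function.Injective (fun ω : Loop d => (⟨ω.len, fun k => ω.path k⟩ :
      Σ n : ℕ, (Fin (n + 1) → Zd d))) := by
    intro ω1 ω2 h
    obtain ⟨hlen, hpath⟩ := Sigma.mk.inj_iff.mp h
    rcases ω1 with ⟨l1, h1, p1, c1, n1, f1⟩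
    rcases ω2 with ⟨l2, h2, p2, c2, n2, f2⟩
    dsimp at hlen hpath
    subst hlen
    have hpath' : ∀ k : Fin (l1 + 1), p1 k = p2 k := by
      intro k; exact congrFun (eq_of_heq hpath) k
    have : p1 = p2 := by
      funext k
      rcases le_or_gt k l1 with hk | hk
      · exact hpath' ⟨k, by omega⟩
      · rw [f1 k hk.le, f2 k hk.le]
        have := hpath' ⟨l1, by omega⟩
        simpa using this
    subst this
    rfl
  exact this.countable

/-! ### `tsum` and `encard` -/

private lemma tsum_one_encard {α : Type*} (S : Set α) :
    ∑' _ : S, (1 : ℝ≥0∞) = S.encard := by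
  rcases S.finite_or_infinite with hS | hS
  · haveI := hS.fintype
    rw [tsum_fintype, Finset.sum_const, hS.encard_eq_coe_toFinset_card]
    simp [Set.Finite.card_toFinset]
    rw [← hS.cast_ncard_eq, ENat.toENNReal_coe]
  · haveI := hS.to_subtype
    rw [ENNReal.tsum_const_eq_top_of_ne_zero one_ne_zero, hS.encard_eq]
    simp

private lemma Es_le_one (K : Set (Zd d)) (x : Zd d) : Es d K x ≤ 1 := by
  have hbdd : BddBelow (Set.range fun n =>
      (walkP d n x {f | ∀ k, 1 ≤ k → k ≤ n → f k ∉ K}).toReal) := by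
    refine ⟨0, ?_⟩
    rintro r ⟨n, rfl⟩
    exact ENNReal.toReal_nonneg
  refine le_trans (ciInf_le hbdd 0) ?_
  have hset : FinPaths d 0 x = {fun _ => x} := by
    ext f
    simp only [FinPaths, Set.mem_setOf_eq, Set.mem_singleton_iff]
    constructor
    · rintro ⟨h0, -, hfr⟩
      funext k
      rw [hfr k (Nat.zero_le k), h0]
    · rintro rfl
      exact ⟨rfl, fun k hk => absurd hk (Nat.not_lt_zero k), fun k _ => rfl⟩
  have hmem : (fun _ => x) ∈ {f : ℕ → Zd d | ∀ k, 1 ≤ k → k ≤ 0 → f k ∉ K} := by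
    intro k h1 h0
    omega
  rw [walkP, walkE, hset]
  rw [tsum_eq_single (⟨fun _ => x, rfl⟩ : ({fun _ => x} : Set (ℕ → Zd d)))
    (fun b hb => absurd (Subtype.ext (by exact b.2)) hb)]
  rw [Set.indicator_of_mem hmem]
  simp

private lemma capE_le_encard (K : Set (Zd d)) : capE d K ≤ K.encard := by
  calc capE d K ≤ ∑' _ : K, (1 : ℝ≥0∞) :=
        ENNReal.tsum_le_tsum fun x => ENNReal.ofReal_le_one.mpr (Es_le_one K x)
    _ = K.encard := tsum_one_encard K

/-! ### Cluster basics -/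

private lemma cluster_mono {η η' : Config d} (h : ∀ ω, η ω ≤ η' ω) (x : Zd d) :
    cluster η x ⊆ cluster η' x := by
  rintro y ⟨p, n, hn, h0, hy, hop⟩
  exact ⟨p, n, hn, h0, hy, fun k hk => by
    obtain ⟨ω, hω, _, htr⟩ := hop k hk
    exact ⟨ω, lt_of_lt_of_le hω (h ω), trivial, htr⟩⟩

private lemma measurable_openEdge (x y : Zd d) :
    MeasurableSet {η : Config d | openEdgeVia η (fun _ => True) x y} := by
  have hrw : {η : Config d | openEdgeVia η (fun _ => True) x y}
      = ⋃ ω : Loop d, ({η : Config d | 0 < η ω} ∩ {η : Config d | ω.traverses x y}) := by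
    ext η
    simp only [openEdgeVia, Set.mem_setOf_eq, Set.mem_iUnion, Set.mem_inter_iff, true_and]
  rw [hrw]
  refine MeasurableSet.iUnion fun ω => MeasurableSet.inter ?_ ?_
  · exact measurable_pi_apply ω (MeasurableSpace.measurableSet_top
      (s := {m : ℕ | 0 < m}))
  · by_cases h : ω.traverses x y <;> simp [h]

private lemma measurable_clusterMem (y : Zd d) :
    MeasurableSet {η : Config d | y ∈ cluster η 0} := by
  have hrw : {η : Config d | y ∈ cluster η 0}
      = ⋃ (n : ℕ) (q : Fin (n + 2) → Zd d)
          (_ : q 0 = 0 ∧ q (Fin.last (n + 1)) = y),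
          ⋂ (k : ℕ) (_ : k < n + 1),
            {η : Config d | openEdgeVia η (fun _ => True)
              (q ⟨k, by omega⟩) (q ⟨k + 1, by omega⟩)} := by
    ext η
    simp only [Set.mem_setOf_eq, Set.mem_iUnion, Set.mem_iInter]
    constructor
    · rintro ⟨p, n, hn, h0, hy, hop⟩
      obtain ⟨m, rfl⟩ : ∃ m, n = m + 1 := ⟨n - 1, by omega⟩
      refine ⟨m, fun k => p k, ⟨h0, hy⟩, ?_⟩
      intro k hk
      exact hop k hk
    · rintro ⟨n, q, ⟨h0, hy⟩, hop⟩
      refine ⟨fun k => if h : k < n + 2 then q ⟨k, h⟩ else y, n + 1, by omega, ?_, ?_, ?_⟩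
      · show (if h : (0 : ℕ) < n + 2 then q ⟨0, h⟩ else y) = 0
        rw [dif_pos (by omega : (0 : ℕ) < n + 2)]
        exact h0
      · show (if h : n + 1 < n + 2 then q ⟨n + 1, h⟩ else y) = y
        rw [dif_pos (by omega : n + 1 < n + 2)]
        exact hy
      · intro k hk
        show openEdgeVia η (fun _ => True)
          (if h : k < n + 2 then q ⟨k, h⟩ else y)
          (if h : k + 1 < n + 2 then q ⟨k + 1, h⟩ else y)
        rw [dif_pos (by omega : k < n + 2), dif_pos (by omega : k + 1 < n + 2)]
        exact hop k hk
  rw [hrw]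
  refine MeasurableSet.iUnion fun n => ?_
  refine MeasurableSet.iUnion fun q => ?_
  refine MeasurableSet.iUnion fun _ => ?_
  exact MeasurableSet.iInter fun k => MeasurableSet.iInter fun _ =>
    measurable_openEdge _ _

private lemma measurable_gfun :
    Measurable (fun η : Config d => ((cluster η 0 ∪ {0}).encard : ℝ≥0∞)) := by
  have hrw : (fun η : Config d => ((cluster η 0 ∪ {0}).encard : ℝ≥0∞))
      = fun η => ∑' y : Zd d,
          Set.indicator {η' : Config d | y ∈ cluster η' 0 ∪ {0}} (fun _ => (1 : ℝ≥0∞)) η := by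
    funext η
    rw [← tsum_one_encard (cluster η 0 ∪ {0}),
      tsum_subtype (cluster η 0 ∪ {0}) (fun _ => (1 : ℝ≥0∞))]
    exact tsum_congr fun y => rfl
  rw [hrw]
  refine Measurable.ennreal_tsum fun y => ?_
  refine Measurable.indicator measurable_const ?_
  have hsplit : {η' : Config d | y ∈ cluster η' 0 ∪ {0}}
      = {η' : Config d | y ∈ cluster η' 0} ∪ {η' : Config d | y ∈ ({0} : Set (Zd d))} := by
    ext η'
    simp only [Set.mem_setOf_eq, Set.mem_union]
  rw [hsplit]
  refine (measurable_clusterMem y).union ?_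
  by_cases h : y ∈ ({0} : Set (Zd d)) <;> simp [h]

/-! ### Crossing estimate -/

private lemma exists_cross (p : ℕ → Zd d) (n : ℕ)
    (hstep : ∀ k < n, nrm (p (k + 1) - p k) = 1) (h0 : p 0 = 0) (c : ℝ) (hc : 0 ≤ c)
    (hn : c < nrm (p n)) : ∃ k, k ≤ n ∧ c < nrm (p k) ∧ nrm (p k) ≤ c + 1 := by
  induction n with
  | zero =>
    exfalso
    rw [h0, nrm_zero'] at hn
    linarith
  | succ n ih =>
    by_cases hcn : c < nrm (p n)
    · obtain ⟨k, hk, h1, h2⟩ := ih (fun k hk => hstep k (hk.trans (Nat.lt_succ_self n))) hcn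
      exact ⟨k, hk.trans (Nat.le_succ n), h1, h2⟩
    · refine ⟨n + 1, le_rfl, hn, ?_⟩
      push_neg at hcn
      have habs := nrm_sub_abs (p (n + 1)) (p n)
      rw [hstep n (Nat.lt_succ_self n)] at habs
      have h2 := (abs_le.mp habs).2
      linarith

private lemma key_inclusion (η : Config d) (K : ℕ)
    (h : ((cluster η 0 ∪ {0}) ∩ bdry (ball d K)).Nonempty) :
    (K : ℝ≥0∞) ≤ ((cluster η 0 ∪ {0}).encard : ℝ≥0∞) := by
  rcases Nat.eq_zero_or_pos K with rfl | hK
  · simp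
  obtain ⟨x, hxC, hxb⟩ := h
  obtain ⟨hxball, y, hyball, hxy⟩ := hxb
  have hybig : ¬ nrm y ≤ (K : ℝ) := hyball
  push_neg at hybig
  have hxynrm : nrm (x - y) = 1 := hxy
  have hxbig : (K : ℝ) - 1 < nrm x := by
    have h1 := nrm_sub_abs y x
    rw [nrm_sub_comm y x, hxynrm] at h1
    have h2 := (abs_le.mp h1).2
    linarith
  have hK1 : (1 : ℝ) ≤ (K : ℝ) := by exact_mod_cast hK
  have hx0 : x ≠ 0 := by
    intro h0
    rw [h0, nrm_zero'] at hxbig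
    linarith
  have hxC' : x ∈ cluster η 0 := by
    rcases hxC with h | h
    · exact h
    · exact absurd h hx0
  obtain ⟨p, n, hn, hp0, hpn, hop⟩ := hxC'
  have hstep : ∀ k < n, nrm (p (k + 1) - p k) = 1 := by
    intro k hk
    obtain ⟨ω, hω, -, j, hj, hcase⟩ := hop k hk
    have hnn : nrm (ω.path (j + 1) - ω.path j) = 1 := ω.nn j hj
    rcases hcase with ⟨h1, h2⟩ | ⟨h1, h2⟩
    · rw [h1, h2] at hnn
      exact hnn
    · rw [h1, h2] at hnn
      rw [nrm_sub_comm]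
      exact hnn
  have hmem : ∀ k ≤ n, p k ∈ cluster η 0 ∪ {0} := by
    intro k hk
    rcases Nat.eq_zero_or_pos k with rfl | hkpos
    · right
      rw [hp0]
      rfl
    · left
      exact ⟨p, k, hkpos, hp0, rfl, fun j hj => hop j (by omega)⟩
  have hchoice : ∀ j : Fin K, ∃ z, z ∈ cluster η 0 ∪ {0} ∧
      (if (j : ℕ) = 0 then nrm z = 0
        else (((j : ℕ) : ℝ) - 1 < nrm z ∧ nrm z ≤ ((j : ℕ) : ℝ))) := by
    intro j
    by_cases hj : (j : ℕ) = 0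
    · refine ⟨0, Or.inr rfl, ?_⟩
      rw [if_pos hj]
      exact nrm_zero'
    · simp only [if_neg hj]
      have hj1 : 1 ≤ (j : ℕ) := by omega
      have hj1R : (1 : ℝ) ≤ ((j : ℕ) : ℝ) := by exact_mod_cast hj1
      have hc : ((j : ℕ) : ℝ) - 1 < nrm (p n) := by
        rw [hpn]
        have hjK : (j : ℕ) + 1 ≤ K := by omega
        have hjKR : ((j : ℕ) : ℝ) + 1 ≤ (K : ℝ) := by exact_mod_cast hjK
        linarith
      obtain ⟨k, hkn, h1, h2⟩ := exists_cross p n hstep hp0 (((j : ℕ) : ℝ) - 1)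
        (by linarith) hc
      exact ⟨p k, hmem k hkn, h1, by linarith⟩
  choose fz hfz1 hfz2 using hchoice
  have hbnd : ∀ u w : Fin K, (u : ℕ) < (w : ℕ) → fz u ≠ fz w := by
    intro u w huw heq
    have h2w := hfz2 w
    rw [if_neg (by omega : ¬ (w : ℕ) = 0)] at h2w
    have hu_le : nrm (fz u) ≤ ((u : ℕ) : ℝ) := by
      by_cases hu : (u : ℕ) = 0
      · have h2u := hfz2 u
        rw [if_pos hu] at h2u
        rw [h2u]
        exact Nat.cast_nonneg _
      · have h2u := hfz2 u
        rw [if_neg hu] at h2u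
        exact h2u.2
    rw [heq] at hu_le
    have hcast : ((u : ℕ) : ℝ) + 1 ≤ ((w : ℕ) : ℝ) := by exact_mod_cast huw
    linarith [h2w.1]
  have hinj : Function.Injective fz := by
    intro a b hab
    by_contra hne
    rcases lt_trichotomy (a : ℕ) (b : ℕ) with h | h | h
    · exact hbnd a b h hab
    · exact hne (Fin.ext h)
    · exact hbnd b a h hab.symm
  have hsub : Set.range fz ⊆ cluster η 0 ∪ {0} := Set.range_subset_iff.mpr hfz1
  have hle : (Set.range fz).encard ≤ (cluster η 0 ∪ {0}).encard := Set.encard_le_encard hsub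
  have hrange : (Set.range fz).encard = (K : ℕ∞) := by
    rw [← Set.image_univ, Set.InjOn.encard_image hinj.injOn, Set.encard_univ]
    simp
  rw [hrange] at hle
  have := ENat.toENNReal_le.mpr hle
  simpa using this

/-! ### Dyadic digits -/

private noncomputable def dgt (i : ℕ) (x : ℝ) : ℤ := ⌊(2 : ℝ) ^ (i + 1) * x⌋ % 2

private noncomputable def vol01 : Measure ℝ := MeasureTheory.volume.restrict (Set.Ico (0 : ℝ) 1)

private instance : IsProbabilityMeasure (vol01) := by
  constructor
  rw [vol01, Measure.restrict_apply MeasurableSet.univ, Set.univ_inter, Real.volume_Ico]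
  norm_num

private lemma measurable_dgt (i : ℕ) : Measurable (dgt i) := by
  have h1 : Measurable fun x : ℝ => ⌊(2 : ℝ) ^ (i + 1) * x⌋ :=
    Int.measurable_floor.comp (measurable_const_mul _)
  exact (measurable_of_countable (fun z : ℤ => z % 2)).comp h1

private lemma dgt_mem (i : ℕ) (x : ℝ) : dgt i x = 0 ∨ dgt i x = 1 :=
  Int.emod_two_eq_zero_or_one _

private noncomputable def wgt (z : ℤ) : ℝ≥0∞ := if z = 0 ∨ z = 1 then 2⁻¹ else 0

private lemma meas_ext_singleton {α : Type*} [Countable α] [MeasurableSpace α]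
    (hsing : ∀ a : α, MeasurableSet {a}) {μ ν : Measure α} (h : ∀ a, μ {a} = ν {a}) :
    μ = ν := by
  refine Measure.ext fun s hs => ?_
  have key : ∀ μ' : Measure α, μ' s = ∑' a : s, μ' {(a : α)} := by
    intro μ'
    have hrw : s = ⋃ a : s, {(a : α)} := by simp
    conv_lhs => rw [hrw]
    rw [measure_iUnion ?_ fun a => hsing _]
    intro a b hab
    simp only [Set.disjoint_singleton]
    exact Subtype.coe_injective.ne hab
  rw [key μ, key ν]
  exact tsum_congr fun a => h _

private lemma floor_two_mul (z : ℝ) : ⌊2 * z⌋ = 2 * ⌊z⌋ + ⌊2 * z⌋ % 2 := by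
  have h1 : ⌊z⌋ = ⌊2 * z⌋ / 2 := by
    set q := ⌊2 * z⌋ with hq
    have hq1 : (q : ℝ) ≤ 2 * z := Int.floor_le _
    have hq2 : 2 * z < q + 1 := Int.lt_floor_add_one _
    have hr0 : 0 ≤ q % 2 := Int.emod_nonneg q (by norm_num)
    have hr1 : q % 2 < 2 := Int.emod_lt_of_pos q (by norm_num)
    have hqd : 2 * (q / 2) + q % 2 = q := Int.mul_ediv_add_emod q 2
    have hcast : (q : ℝ) = 2 * ((q / 2 : ℤ) : ℝ) + ((q % 2 : ℤ) : ℝ) := by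
      exact_mod_cast hqd.symm
    rw [Int.floor_eq_iff]
    constructor
    · have hle : ((q % 2 : ℤ) : ℝ) ≥ 0 := by exact_mod_cast hr0
      nlinarith
    · have hle : ((q % 2 : ℤ) : ℝ) ≤ 1 := by exact_mod_cast by omega
      nlinarith
  rw [h1]
  omega

private lemma floor_pow_succ (x : ℝ) (m : ℕ) :
    ⌊(2 : ℝ) ^ (m + 1) * x⌋ = 2 * ⌊(2 : ℝ) ^ m * x⌋ + dgt m x := by
  have h : (2 : ℝ) ^ (m + 1) * x = 2 * ((2 : ℝ) ^ m * x) := by ring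
  rw [dgt, h, floor_two_mul ((2 : ℝ) ^ m * x)]
  omega

private lemma mem_Ico_iff_floor (m : ℕ) (a : ℤ) (x : ℝ) :
    x ∈ Set.Ico ((a : ℝ) / 2 ^ m) (((a : ℝ) + 1) / 2 ^ m) ↔ ⌊(2 : ℝ) ^ m * x⌋ = a := by
  have h2 : (0 : ℝ) < 2 ^ m := by positivity
  rw [Set.mem_Ico, Int.floor_eq_iff, div_le_iff₀ h2, lt_div_iff₀ h2]
  constructor
  · rintro ⟨h1, h3⟩
    constructor
    · linarith [mul_comm (a : ℝ) ((2:ℝ) ^ m)]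
    · linarith [mul_comm ((a : ℝ) + 1) ((2:ℝ) ^ m)]
  · rintro ⟨h1, h3⟩
    constructor
    · linarith [mul_comm (a : ℝ) ((2:ℝ) ^ m)]
    · linarith [mul_comm ((a : ℝ) + 1) ((2:ℝ) ^ m)]

private lemma atom_Ico (n : ℕ) (v : ℕ → ℤ) (hv : ∀ i < n, v i = 0 ∨ v i = 1) :
    ∃ k : ℕ, k < 2 ^ n ∧
      {x ∈ Set.Ico (0 : ℝ) 1 | ∀ i < n, dgt i x = v i}
        = Set.Ico ((k : ℝ) / 2 ^ n) (((k : ℝ) + 1) / 2 ^ n) := by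
  induction n with
  | zero =>
    refine ⟨0, by norm_num, ?_⟩
    ext x
    simp
  | succ n ih =>
    obtain ⟨k, hk, hset⟩ := ih fun i hi => hv i (by omega)
    refine ⟨2 * k + (v n).toNat, ?_, ?_⟩
    · have hps : 2 ^ (n + 1) = 2 ^ n * 2 := pow_succ 2 n
      rcases hv n (by omega) with h | h <;> rw [h] <;> simp <;> omega
    · have hvn : ((2 * k + (v n).toNat : ℕ) : ℤ) = 2 * (k : ℤ) + v n := by
        rcases hv n (by omega) with h | h <;> rw [h] <;> push_cast <;> ring
      ext x
      constructor
      · rintro ⟨hx01, hall⟩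
        have hxold : x ∈ Set.Ico ((k : ℝ) / 2 ^ n) (((k : ℝ) + 1) / 2 ^ n) := by
          rw [← hset]
          exact ⟨hx01, fun i hi => hall i (by omega)⟩
        have hcast1 : (((k : ℤ) : ℝ)) = (k : ℝ) := by push_cast; ring
        have hfl : ⌊(2 : ℝ) ^ n * x⌋ = (k : ℤ) := by
          refine (mem_Ico_iff_floor n (k : ℤ) x).mp ?_
          rw [hcast1]
          exact hxold
        have hfl2 : ⌊(2 : ℝ) ^ (n + 1) * x⌋ = 2 * (k : ℤ) + v n := by
          rw [floor_pow_succ, hfl, hall n (by omega)]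
        have hcast2 : ((2 * k + (v n).toNat : ℕ) : ℝ) = ((2 * (k : ℤ) + v n : ℤ) : ℝ) := by
          exact_mod_cast congrArg (Int.cast : ℤ → ℝ) hvn
        rw [Set.mem_Ico, hcast2]
        have := (mem_Ico_iff_floor (n + 1) (2 * (k : ℤ) + v n) x).mpr hfl2
        rw [Set.mem_Ico] at this
        exact this
      · intro hx
        have hcast2 : ((2 * k + (v n).toNat : ℕ) : ℝ) = ((2 * (k : ℤ) + v n : ℤ) : ℝ) := by
          exact_mod_cast congrArg (Int.cast : ℤ → ℝ) hvn
        have hfl2 : ⌊(2 : ℝ) ^ (n + 1) * x⌋ = 2 * (k : ℤ) + v n := by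
          refine (mem_Ico_iff_floor (n + 1) (2 * (k : ℤ) + v n) x).mp ?_
          rw [Set.mem_Ico, ← hcast2]
          rw [Set.mem_Ico] at hx
          exact hx
        have hstep := floor_pow_succ x n
        have hdm := dgt_mem n x
        have hvn' := hv n (by omega)
        have hfl : ⌊(2 : ℝ) ^ n * x⌋ = (k : ℤ) ∧ dgt n x = v n := by
          rw [hfl2] at hstep
          omega
        have hcast1 : (((k : ℤ) : ℝ)) = (k : ℝ) := by push_cast; ring
        have hxold : x ∈ {x ∈ Set.Ico (0 : ℝ) 1 | ∀ i < n, dgt i x = v i} := by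
          rw [hset]
          have := (mem_Ico_iff_floor n (k : ℤ) x).mpr hfl.1
          rwa [hcast1] at this
        refine ⟨hxold.1, fun i hi => ?_⟩
        rcases Nat.lt_succ_iff_lt_or_eq.mp hi with h | h
        · exact hxold.2 i h
        · rw [h]; exact hfl.2

private lemma measurable_atomSet (n : ℕ) (v : ℕ → ℤ) :
    MeasurableSet {x : ℝ | ∀ i < n, dgt i x = v i} := by
  have : {x : ℝ | ∀ i < n, dgt i x = v i}
      = ⋂ (i : ℕ) (_ : i < n), dgt i ⁻¹' {v i} := by
    ext x; simp [Set.mem_iInter]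
  rw [this]
  exact MeasurableSet.iInter fun i => MeasurableSet.iInter fun _ =>
    measurable_dgt i (measurableSet_singleton _)

private lemma vol_atom (n : ℕ) (v : ℕ → ℤ) :
    vol01 {x | ∀ i < n, dgt i x = v i} = ∏ i ∈ Finset.range n, wgt (v i) := by
  by_cases hgood : ∀ i < n, v i = 0 ∨ v i = 1
  · obtain ⟨k, hk, hset⟩ := atom_Ico n v hgood
    rw [vol01, Measure.restrict_apply (measurable_atomSet n v)]
    have h1 : {x : ℝ | ∀ i < n, dgt i x = v i} ∩ Set.Ico 0 1
        = {x ∈ Set.Ico (0 : ℝ) 1 | ∀ i < n, dgt i x = v i} := by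
      ext x; exact and_comm
    rw [h1, hset, Real.volume_Ico]
    have h2 : ((k : ℝ) + 1) / 2 ^ n - (k : ℝ) / 2 ^ n = ((2 : ℝ) ^ n)⁻¹ := by
      field_simp
      ring
    rw [h2]
    have h3 : ∏ i ∈ Finset.range n, wgt (v i) = (2 : ℝ≥0∞)⁻¹ ^ n := by
      calc ∏ i ∈ Finset.range n, wgt (v i) = ∏ _i ∈ Finset.range n, (2 : ℝ≥0∞)⁻¹ :=
            Finset.prod_congr rfl fun i hi => by
              rw [wgt, if_pos (hgood i (Finset.mem_range.mp hi))]
        _ = (2 : ℝ≥0∞)⁻¹ ^ n := by rw [Finset.prod_const, Finset.card_range]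
    rw [h3, ← ENNReal.inv_pow,
      ENNReal.ofReal_inv_of_pos (by positivity : (0:ℝ) < 2 ^ n),
      ENNReal.ofReal_pow (by norm_num : (0:ℝ) ≤ 2)]
    norm_num
  · push_neg at hgood
    obtain ⟨i0, hi0, hbad1, hbad2⟩ := hgood
    have hempty : {x : ℝ | ∀ i < n, dgt i x = v i} = ∅ := by
      ext x
      simp only [Set.mem_setOf_eq, Set.mem_empty_iff_false, iff_false]
      intro hx
      rcases dgt_mem i0 x with h | h
      · exact hbad1 (by rw [← hx i0 hi0]; exact h)
      · exact hbad2 (by rw [← hx i0 hi0]; exact h)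
    rw [hempty, measure_empty]
    exact (Finset.prod_eq_zero (Finset.mem_range.mpr hi0)
      (by rw [wgt, if_neg (by tauto)])).symm

private lemma vol_cyl {ι : Type*} (F : Finset ι) (idx : ι → ℕ) (hinj : Set.InjOn idx F)
    (v : ι → ℤ) :
    vol01 {x | ∀ i ∈ F, dgt (idx i) x = v i} = ∏ i ∈ F, wgt (v i) := by
  classical
  set n := (F.sup idx) + 1 with hn
  have hlt : ∀ i ∈ F, idx i < n := fun i hi => by
    have := Finset.le_sup (f := idx) hi
    omega
  set nu : Measure ℤ := (2 : ℝ≥0∞)⁻¹ • (Measure.dirac 0 + Measure.dirac 1) with hnu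
  have hnus : ∀ z : ℤ, nu {z} = wgt z := by
    intro z
    rw [hnu, wgt]
    rw [Measure.smul_apply, Measure.add_apply,
      Measure.dirac_apply' _ (measurableSet_singleton z),
      Measure.dirac_apply' _ (measurableSet_singleton z)]
    by_cases h0 : z = 0
    · subst h0; simp
    · by_cases h1 : z = 1
      · subst h1; simp
      · simp [Set.indicator_apply, Ne.symm h0, Ne.symm h1, h0, h1]
  haveI : IsProbabilityMeasure nu := by
    constructor
    rw [hnu]
    simp only [Measure.smul_apply, Measure.add_apply, measure_univ, smul_eq_mul]
    rw [show (1:ℝ≥0∞) + 1 = 2 by norm_num, ENNReal.inv_mul_cancel (by norm_num) (by norm_num)]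
  haveI : SigmaFinite nu := inferInstance
  set D : ℝ → (Fin n → ℤ) := fun x j => dgt j x with hD
  have hDmeas : Measurable D := measurable_pi_lambda _ fun j => measurable_dgt j
  have hsing : ∀ u : Fin n → ℤ, MeasurableSet {u} := fun u => by
    rw [← Set.univ_pi_singleton]
    exact MeasurableSet.univ_pi fun j => measurableSet_singleton _
  have hmap : vol01.map D = Measure.pi (fun _ : Fin n => nu) := by
    refine meas_ext_singleton hsing fun u => ?_
    rw [Measure.map_apply hDmeas (hsing u)]
    have hpre : D ⁻¹' {u} = {x : ℝ | ∀ i < n,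
        dgt i x = (if h : i < n then u ⟨i, h⟩ else 0)} := by
      ext x
      simp only [Set.mem_preimage, Set.mem_singleton_iff, Set.mem_setOf_eq, funext_iff, hD]
      constructor
      · intro h i hi
        rw [dif_pos hi]
        exact h ⟨i, hi⟩
      · intro h j
        have := h j.1 j.2
        rwa [dif_pos j.2] at this
    rw [hpre, vol_atom]
    rw [← Set.univ_pi_singleton, Measure.pi_pi]
    rw [← Fin.prod_univ_eq_prod_range (fun i => wgt (if h : i < n then u ⟨i, h⟩ else 0)) n]
    exact Finset.prod_congr rfl fun j _ => by rw [dif_pos j.2, Fin.eta, hnus]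
  set j0 : ι → Fin n := fun i => if h : i ∈ F then ⟨idx i, hlt i h⟩ else ⟨0, by omega⟩
    with hj0
  have hj0F : ∀ i (h : i ∈ F), j0 i = ⟨idx i, hlt i h⟩ := fun i h => by
    rw [hj0]; simp [dif_pos h]
  set T : Set (Fin n → ℤ) :=
    {u | ∀ i, ∀ h : i ∈ F, u ⟨idx i, hlt i h⟩ = v i} with hT
  have hTmeas : MeasurableSet T := by
    have heq : T = ⋂ i ∈ (F : Set ι), (fun u : Fin n → ℤ => u (j0 i)) ⁻¹' {v i} := by
      ext u
      simp only [hT, Set.mem_setOf_eq, Set.mem_iInter, Finset.mem_coe, Set.mem_preimage,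
        Set.mem_singleton_iff]
      constructor
      · intro h i hi
        rw [hj0F i hi]
        exact h i hi
      · intro h i hi
        have := h i hi
        rwa [hj0F i hi] at this
    rw [heq]
    exact MeasurableSet.biInter F.countable_toSet fun i hi =>
      measurable_pi_apply _ (measurableSet_singleton _)
  have hSeq : {x | ∀ i ∈ F, dgt (idx i) x = v i} = D ⁻¹' T := by
    ext x
    simp only [Set.mem_setOf_eq, Set.mem_preimage, hT, hD]
  rw [hSeq, ← Measure.map_apply hDmeas hTmeas, hmap]
  -- express T as a product set
  set B : Fin n → Set ℤ := fun j =>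
    {z | ∀ i, ∀ _ : i ∈ F, (⟨idx i, hlt i ‹_›⟩ : Fin n) = j → z = v i} with hB
  have hTpi : T = Set.pi Set.univ B := by
    ext u
    simp only [hT, hB, Set.mem_setOf_eq, Set.mem_pi, Set.mem_univ, forall_true_left]
    constructor
    · intro h j i hi hj
      rw [← hj]
      exact h i hi
    · intro h i hi
      exact h ⟨idx i, hlt i hi⟩ i hi rfl
  rw [hTpi, Measure.pi_pi]
  -- evaluate the product
  have hj0inj : Set.InjOn j0 F := by
    intro a ha b hb hab
    rw [hj0F a ha, hj0F b hb] at hab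
    exact hinj ha hb (by injection hab)
  have hBj0 : ∀ i ∈ F, B (j0 i) = {v i} := by
    intro i hi
    ext z
    simp only [hB, Set.mem_setOf_eq, Set.mem_singleton_iff]
    constructor
    · intro h
      exact h i hi (hj0F i hi).symm
    · intro h i' hi' hj
      rw [hj0F i hi] at hj
      have : idx i' = idx i := by injection hj
      rw [h, hinj hi' hi this]
  have hBout : ∀ j : Fin n, j ∉ F.image (fun i => j0 i) → B j = Set.univ := by
    intro j hj
    ext z
    simp only [hB, Set.mem_setOf_eq, Set.mem_univ, iff_true]
    intro i hi hij
    exfalso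
    refine hj (Finset.mem_image.mpr ⟨i, hi, ?_⟩)
    rw [hj0F i hi]
    exact hij
  rw [← Finset.prod_subset (Finset.subset_univ (F.image j0))
    (fun j _ hj => by rw [hBout j hj]; simp)]
  rw [Finset.prod_image (fun a ha b hb hab => hj0inj ha hb hab)]
  exact Finset.prod_congr rfl fun i hi => by rw [hBj0 i hi, hnus]

/-! ### Binary reconstruction -/

private noncomputable def gsum (f : ℕ → ℤ) : ℝ := ∑' n : ℕ, (if f n = 1 then (1 : ℝ) else 0) * (2 : ℝ)⁻¹ ^ (n + 1)

private lemma gsum_summable (f : ℕ → ℤ) :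
    Summable (fun n : ℕ => (if f n = 1 then (1 : ℝ) else 0) * (2 : ℝ)⁻¹ ^ (n + 1)) := by
  have hs : Summable (fun n : ℕ => (2 : ℝ)⁻¹ ^ (n + 1)) := by
    have := (summable_geometric_of_lt_one (by norm_num : (0:ℝ) ≤ 2⁻¹)
      (by norm_num : (2:ℝ)⁻¹ < 1)).mul_left (2 : ℝ)⁻¹
    refine this.congr fun n => ?_
    rw [pow_succ]
    ring
  refine Summable.of_nonneg_of_le (fun n => by positivity) (fun n => ?_) hs
  by_cases h : f n = 1 <;> simp [h] <;> positivity

private lemma measurable_gsum : Measurable[MeasurableSpace.pi] gsum := by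
  have hpart : ∀ m : ℕ, Measurable[MeasurableSpace.pi] fun f : ℕ → ℤ =>
      ∑ n ∈ Finset.range m, (if f n = 1 then (1 : ℝ) else 0) * (2 : ℝ)⁻¹ ^ (n + 1) := by
    intro m
    refine Finset.measurable_sum _ fun n _ => ?_
    refine Measurable.mul ?_ measurable_const
    have hs : MeasurableSet[MeasurableSpace.pi] {f : ℕ → ℤ | f n = 1} :=
      measurable_pi_apply n (measurableSet_singleton 1)
    exact Measurable.ite hs measurable_const measurable_const
  refine measurable_of_tendsto_metrizable' atTop hpart ?_
  rw [tendsto_pi_nhds]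
  intro f
  exact (gsum_summable f).hasSum.tendsto_sum_nat

private lemma partial_sum_dgt {x : ℝ} (hx : x ∈ Set.Ico (0 : ℝ) 1) (m : ℕ) :
    ∑ n ∈ Finset.range m, (if dgt n x = 1 then (1 : ℝ) else 0) * (2 : ℝ)⁻¹ ^ (n + 1)
      = ((⌊(2 : ℝ) ^ m * x⌋ : ℤ) : ℝ) / 2 ^ m := by
  induction m with
  | zero =>
    have h0 : ⌊x⌋ = 0 := by
      rw [Int.floor_eq_zero_iff]
      exact hx
    simp [h0]
  | succ m ih =>
    rw [Finset.sum_range_succ, ih, floor_pow_succ x m]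
    have hd : (if dgt m x = 1 then (1 : ℝ) else 0) = ((dgt m x : ℤ) : ℝ) := by
      rcases dgt_mem m x with h | h <;> simp [h]
    rw [hd]
    have h2 : (2 : ℝ) ^ m ≠ 0 := by positivity
    have h3 : (2 : ℝ) ^ (m + 1) ≠ 0 := by positivity
    have h4 : (1/2:ℝ)^m * 2^(m*2) = 2^m := by rw [pow_mul, one_div_pow]; field_simp
    push_cast
    field_simp
    linear_combination ((dgt m x : ℤ) : ℝ) * h4

private lemma gsum_dgt {x : ℝ} (hx : x ∈ Set.Ico (0 : ℝ) 1) : gsum (fun n => dgt n x) = x := by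
  have hsum := gsum_summable (fun n => dgt n x)
  have htend : Tendsto (fun m => ((⌊(2 : ℝ) ^ m * x⌋ : ℤ) : ℝ) / 2 ^ m) atTop (𝓝 x) := by
    have hgeo : Tendsto (fun m : ℕ => (2 : ℝ)⁻¹ ^ m) atTop (𝓝 0) :=
      tendsto_pow_atTop_nhds_zero_of_lt_one (by norm_num) (by norm_num)
    have hlow : Tendsto (fun m : ℕ => x - (2 : ℝ)⁻¹ ^ m) atTop (𝓝 x) := by
      have := tendsto_const_nhds.sub hgeo (f := fun _ : ℕ => x)
      simpa using this
    refine tendsto_of_tendsto_of_tendsto_of_le_of_le hlow tendsto_const_nhds ?_ ?_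
    · intro m
      have h1 : (2 : ℝ) ^ m * x < ⌊(2 : ℝ) ^ m * x⌋ + 1 := Int.lt_floor_add_one _
      have h2 : (0 : ℝ) < 2 ^ m := by positivity
      show x - 2⁻¹ ^ m ≤ ((⌊(2 : ℝ) ^ m * x⌋ : ℤ) : ℝ) / 2 ^ m
      rw [inv_pow, le_div_iff₀ h2]
      have hinv : ((2 : ℝ) ^ m)⁻¹ * 2 ^ m = 1 := inv_mul_cancel₀ (ne_of_gt h2)
      nlinarith [h1]
    · intro m
      have h1 : ((⌊(2 : ℝ) ^ m * x⌋ : ℤ) : ℝ) ≤ (2 : ℝ) ^ m * x := Int.floor_le _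
      have h2 : (0 : ℝ) < 2 ^ m := by positivity
      rw [div_le_iff₀ h2]
      linarith [mul_comm ((2:ℝ) ^ m) x]
  have hps : Tendsto (fun m => ∑ n ∈ Finset.range m,
      (if dgt n x = 1 then (1 : ℝ) else 0) * (2 : ℝ)⁻¹ ^ (n + 1)) atTop (𝓝 x) := by
    refine htend.congr fun m => (partial_sum_dgt hx m).symm
  have : HasSum (fun n => (if dgt n x = 1 then (1 : ℝ) else 0) * (2 : ℝ)⁻¹ ^ (n + 1)) x :=
    hsum.hasSum_iff_tendsto_nat.mpr hps
  exact this.tsum_eq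

/-! ### Quantile function for the Poisson distribution -/

private noncomputable def pcdf (r : ℝ≥0) (k : ℕ) : ℝ := ∑ j ∈ Finset.range (k + 1), poissonPMFReal r j

private noncomputable def qtl (r : ℝ≥0) (u : ℝ) : ℕ := sInf {k | u < pcdf r k}

private lemma pcdf_nonneg (r : ℝ≥0) (k : ℕ) : 0 ≤ pcdf r k :=
  Finset.sum_nonneg fun i _ => poissonPMFReal_nonneg

private lemma pcdf_mono (r : ℝ≥0) : Monotone (pcdf r) := fun j k hjk =>
  Finset.sum_le_sum_of_subset_of_nonneg
    (Finset.range_subset_range.mpr (by omega)) fun i _ _ => poissonPMFReal_nonneg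

private lemma pcdf_le_one (r : ℝ≥0) (k : ℕ) : pcdf r k ≤ 1 :=
  sum_le_hasSum _ (fun i _ => poissonPMFReal_nonneg) (poissonPMFRealSum r)

private lemma pcdf_pos (r : ℝ≥0) (k : ℕ) : 0 < pcdf r k := by
  have h0 : 0 < poissonPMFReal r 0 := by
    rw [poissonPMFReal]
    positivity
  calc (0:ℝ) < poissonPMFReal r 0 := h0
    _ = pcdf r 0 := by simp [pcdf]
    _ ≤ pcdf r k := pcdf_mono r (Nat.zero_le k)

private lemma one_le_of_all_pcdf_le {r : ℝ≥0} {u : ℝ} (h : ∀ j, pcdf r j ≤ u) : 1 ≤ u := by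
  refine le_of_tendsto (poissonPMFRealSum r).tendsto_sum_nat ?_
  filter_upwards with n
  calc ∑ j ∈ Finset.range n, poissonPMFReal r j ≤ pcdf r n :=
        Finset.sum_le_sum_of_subset_of_nonneg
          (Finset.range_subset_range.mpr (by omega)) fun i _ _ => poissonPMFReal_nonneg
    _ ≤ u := h n

private lemma qtl_pre_zero (r : ℝ≥0) :
    qtl r ⁻¹' {0} = Set.Iio (pcdf r 0) ∪ {u | ∀ j, pcdf r j ≤ u} := by
  ext u
  simp only [Set.mem_preimage, Set.mem_singleton_iff, Set.mem_union, Set.mem_Iio,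
    Set.mem_setOf_eq, qtl, Nat.sInf_eq_zero, Set.mem_setOf_eq]
  constructor
  · rintro (h | h)
    · exact Or.inl h
    · refine Or.inr fun j => ?_
      by_contra hj
      exact absurd (Set.eq_empty_iff_forall_notMem.mp h j) (by simpa using lt_of_not_ge hj)
  · rintro (h | h)
    · exact Or.inl h
    · refine Or.inr (Set.eq_empty_iff_forall_notMem.mpr fun j hj => ?_)
      exact absurd hj (not_lt.mpr (h j))

private lemma qtl_pre_succ (r : ℝ≥0) (k : ℕ) :
    qtl r ⁻¹' {k + 1} = Set.Ico (pcdf r k) (pcdf r (k + 1)) := by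
  ext u
  simp only [Set.mem_preimage, Set.mem_singleton_iff, Set.mem_Ico, qtl]
  constructor
  · intro h
    have hne : {j | u < pcdf r j}.Nonempty := by
      by_contra hne
      rw [Set.not_nonempty_iff_eq_empty] at hne
      rw [hne, Nat.sInf_empty] at h
      omega
    have hmem := Nat.sInf_mem hne
    rw [h] at hmem
    have hk : k ∉ {j | u < pcdf r j} := Nat.notMem_of_lt_sInf (by omega)
    exact ⟨not_lt.mp hk, hmem⟩
  · rintro ⟨h1, h2⟩
    refine le_antisymm (Nat.sInf_le h2) (le_csInf ⟨k + 1, h2⟩ fun m hm => ?_)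
    by_contra hmk
    have hmk' : m ≤ k := by omega
    exact absurd hm (not_lt.mpr ((pcdf_mono r hmk').trans h1))

private lemma measurable_qtl (r : ℝ≥0) : Measurable (qtl r) := by
  refine measurable_to_countable' fun k => ?_
  cases k with
  | zero =>
    rw [qtl_pre_zero]
    refine measurableSet_Iio.union ?_
    have : {u : ℝ | ∀ j, pcdf r j ≤ u} = ⋂ j, Set.Ici (pcdf r j) := by
      ext u; simp [Set.mem_iInter]
    rw [this]
    exact MeasurableSet.iInter fun j => measurableSet_Ici
  | succ k =>
    rw [qtl_pre_succ]
    exact measurableSet_Ico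

private lemma map_qtl (r : ℝ≥0) : vol01.map (qtl r) = poissonMeasure r := by
  refine meas_ext_singleton (fun k => measurableSet_singleton k) fun k => ?_
  rw [Measure.map_apply (measurable_qtl r) (measurableSet_singleton k)]
  have hpois : poissonMeasure r {k} = ENNReal.ofReal (poissonPMFReal r k) := by
    rw [poissonMeasure_singleton]
    rfl
  rw [hpois]
  cases k with
  | zero =>
    rw [qtl_pre_zero, vol01, Measure.restrict_apply]
    · have hset : (Set.Iio (pcdf r 0) ∪ {u | ∀ j, pcdf r j ≤ u}) ∩ Set.Ico (0:ℝ) 1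
          = Set.Ico 0 (pcdf r 0) := by
        ext u
        simp only [Set.mem_inter_iff, Set.mem_union, Set.mem_Iio, Set.mem_setOf_eq,
          Set.mem_Ico]
        constructor
        · rintro ⟨h | h, h0, h1⟩
          · exact ⟨h0, h⟩
          · exact absurd (one_le_of_all_pcdf_le h) (not_le.mpr h1)
        · rintro ⟨h0, h1⟩
          exact ⟨Or.inl h1, h0, lt_of_lt_of_le h1 (pcdf_le_one r 0)⟩
      rw [hset, Real.volume_Ico]
      congr 1
      simp [pcdf]
    · refine measurableSet_Iio.union ?_
      have : {u : ℝ | ∀ j, pcdf r j ≤ u} = ⋂ j, Set.Ici (pcdf r j) := by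
        ext u; simp [Set.mem_iInter]
      rw [this]
      exact MeasurableSet.iInter fun j => measurableSet_Ici
  | succ k =>
    rw [qtl_pre_succ, vol01, Measure.restrict_apply measurableSet_Ico]
    have hset : Set.Ico (pcdf r k) (pcdf r (k + 1)) ∩ Set.Ico (0:ℝ) 1
        = Set.Ico (pcdf r k) (pcdf r (k + 1)) := by
      refine Set.inter_eq_self_of_subset_left fun u hu => ?_
      rcases hu with ⟨h1, h2⟩
      exact ⟨(pcdf_nonneg r k).trans h1,
        lt_of_lt_of_le h2 (pcdf_le_one r (k + 1))⟩
    rw [hset, Real.volume_Ico]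
    congr 1
    rw [pcdf, pcdf, Finset.sum_range_succ]
    ring

/-! ### The independent block construction -/

private noncomputable def enc (d : ℕ) : Loop d × ℕ → ℕ :=
  (exists_injective_nat (Loop d × ℕ)).choose

private lemma enc_inj : Function.Injective (enc d) :=
  (exists_injective_nat (Loop d × ℕ)).choose_spec

private noncomputable def U (d : ℕ) (ω : Loop d) (x : ℝ) : ℝ :=
  gsum (fun n => dgt (enc d (ω, n)) x)

private lemma measurable_U (ω : Loop d) : Measurable (U d ω) := by
  have h1 : Measurable fun x : ℝ => (fun n => dgt (enc d (ω, n)) x) :=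
    measurable_pi_lambda _ fun n => measurable_dgt _
  exact measurable_gsum.comp h1

end LSP

section LSP2
variable {d : ℕ}

private def seqCyl : Set (Set (ℕ → ℤ)) :=
  {s | ∃ (F : Finset ℕ) (v : ℕ → ℤ), s = {f | ∀ n ∈ F, f n = v n}}

private lemma seqCyl_meas {F : Finset ℕ} {v : ℕ → ℤ} :
    MeasurableSet {f : ℕ → ℤ | ∀ n ∈ F, f n = v n} := by
  have : {f : ℕ → ℤ | ∀ n ∈ F, f n = v n}
      = ⋂ n ∈ (F : Set ℕ), (fun f : ℕ → ℤ => f n) ⁻¹' {v n} := by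
    ext f; simp [Set.mem_iInter]
  rw [this]
  exact MeasurableSet.biInter F.countable_toSet fun n _ =>
    measurable_pi_apply n (measurableSet_singleton _)

private lemma seqCyl_pi : IsPiSystem seqCyl := by
  rintro s ⟨F1, v1, rfl⟩ t ⟨F2, v2, rfl⟩ hne
  obtain ⟨g, hg⟩ := hne
  refine ⟨F1 ∪ F2, fun n => if n ∈ F1 then v1 n else v2 n, ?_⟩
  ext f
  simp only [Set.mem_inter_iff, Set.mem_setOf_eq, Finset.mem_union]
  constructor
  · rintro ⟨h1, h2⟩ n hn
    by_cases hn1 : n ∈ F1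
    · rw [if_pos hn1]; exact h1 n hn1
    · rw [if_neg hn1]
      exact h2 n (by tauto)
  · intro h
    constructor
    · intro n hn
      have := h n (Or.inl hn)
      rwa [if_pos hn] at this
    · intro n hn
      by_cases hn1 : n ∈ F1
      · have e1 := hg.1 n hn1
        have e2 := hg.2 n hn
        have e3 := h n (Or.inl hn1)
        rw [if_pos hn1] at e3
        rw [e3, ← e1, e2]
      · have := h n (Or.inr hn)
        rwa [if_neg hn1] at this

private lemma seqCyl_gen :
    (MeasurableSpace.pi : MeasurableSpace (ℕ → ℤ)) = MeasurableSpace.generateFrom seqCyl := by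
  refine le_antisymm ?_ (MeasurableSpace.generateFrom_le ?_)
  · rw [MeasurableSpace.pi]
    refine iSup_le fun n => ?_
    intro s hs
    obtain ⟨B, -, rfl⟩ := hs
    have hrw : (fun f : ℕ → ℤ => f n) ⁻¹' B
        = ⋃ z : B, {f : ℕ → ℤ | ∀ m ∈ ({n} : Finset ℕ), f m = (z : ℤ)} := by
      ext f
      simp
    rw [hrw]
    exact MeasurableSet.iUnion fun z =>
      MeasurableSpace.measurableSet_generateFrom ⟨{n}, fun _ => (z : ℤ), rfl⟩
  · rintro s ⟨F, v, rfl⟩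
    exact seqCyl_meas

private lemma map_blocks (θ : ℕ → ℕ) (hθ : Function.Injective θ) :
    vol01.map (fun x n => dgt (θ n) x) = vol01.map (fun x n => dgt n x) := by
  have hmeas1 : Measurable (fun (x : ℝ) (n : ℕ) => dgt (θ n) x) :=
    measurable_pi_lambda _ fun n => measurable_dgt _
  have hmeas2 : Measurable (fun (x : ℝ) (n : ℕ) => dgt n x) :=
    measurable_pi_lambda _ fun n => measurable_dgt _
  haveI : IsProbabilityMeasure (vol01.map (fun x n => dgt (θ n) x)) :=
    Measure.isProbabilityMeasure_map hmeas1.aemeasurable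
  haveI : IsProbabilityMeasure (vol01.map (fun x n => dgt n x)) :=
    Measure.isProbabilityMeasure_map hmeas2.aemeasurable
  refine MeasureTheory.ext_of_generate_finite seqCyl seqCyl_gen seqCyl_pi ?_ ?_
  · rintro s ⟨F, v, rfl⟩
    rw [Measure.map_apply hmeas1 seqCyl_meas, Measure.map_apply hmeas2 seqCyl_meas]
    have h1 : (fun (x : ℝ) (n : ℕ) => dgt (θ n) x) ⁻¹' {f | ∀ n ∈ F, f n = v n}
        = {x : ℝ | ∀ n ∈ F, dgt (θ n) x = v n} := rfl
    have h2 : (fun (x : ℝ) (n : ℕ) => dgt n x) ⁻¹' {f | ∀ n ∈ F, f n = v n}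
        = {x : ℝ | ∀ n ∈ F, dgt n x = v n} := rfl
    have h3 := vol_cyl F id (Function.injective_id.injOn) v
    simp only [id] at h3
    rw [h1, h2, vol_cyl F θ (hθ.injOn) v, h3]
  · simp

private lemma map_U (ω : Loop d) : vol01.map (U d ω) = vol01 := by
  have hblk : Measurable (fun (x : ℝ) (n : ℕ) => dgt (enc d (ω, n)) x) :=
    measurable_pi_lambda _ fun n => measurable_dgt _
  have hstd : Measurable (fun (x : ℝ) (n : ℕ) => dgt n x) :=
    measurable_pi_lambda _ fun n => measurable_dgt _
  have hθ : Function.Injective (fun n : ℕ => enc d (ω, n)) := by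
    intro a b hab
    have := enc_inj hab
    exact (Prod.mk.injEq _ _ _ _).mp this |>.2
  have h1 : U d ω = gsum ∘ (fun x n => dgt (enc d (ω, n)) x) := rfl
  rw [h1, ← Measure.map_map measurable_gsum hblk, map_blocks _ hθ,
    Measure.map_map measurable_gsum hstd]
  have hae : (gsum ∘ fun x n => dgt n x) =ᵐ[vol01] id := by
    have hmem : ∀ᵐ x ∂vol01, x ∈ Set.Ico (0 : ℝ) 1 := ae_restrict_mem measurableSet_Ico
    filter_upwards [hmem] with x hx
    exact gsum_dgt hx
  rw [Measure.map_congr hae, Measure.map_id]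

private noncomputable def xiC (d : ℕ) (lam : Loop d → ℝ≥0) (x : ℝ) : Config d :=
  fun ω => qtl (lam ω) (U d ω x)

private lemma measurable_xiCoord (lam : Loop d → ℝ≥0) (ω : Loop d) :
    Measurable (fun x => xiC d lam x ω) :=
  (measurable_qtl (lam ω)).comp (measurable_U ω)

private lemma map_xiCoord (lam : Loop d → ℝ≥0) (ω : Loop d) :
    vol01.map (fun x => xiC d lam x ω) = poissonMeasure (lam ω) := by
  have h1 : (fun x => xiC d lam x ω) = (qtl (lam ω)) ∘ (U d ω) := rfl
  rw [h1, ← Measure.map_map (measurable_qtl (lam ω)) (measurable_U ω), map_U, map_qtl]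

/-! ### Convolution of Poisson measures -/

private lemma top_of_countable {α : Type*} [Countable α] (m : MeasurableSpace α)
    (hsing : ∀ a : α, MeasurableSet[m] {a}) : m = ⊤ := by
  refine le_antisymm le_top fun s _ => ?_
  have : s = ⋃ a : s, {(a : α)} := by simp
  rw [this]
  exact MeasurableSet.iUnion fun a => hsing _

private lemma prodNat_top : (inferInstance : MeasurableSpace (ℕ × ℕ)) = ⊤ := by
  refine top_of_countable _ fun a => ?_
  have : {a} = ({a.1} ×ˢ {a.2} : Set (ℕ × ℕ)) := by simp
  rw [this]
  exact (measurableSet_singleton _).prod (measurableSet_singleton _)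

private lemma rect_gen : (⊤ : MeasurableSpace (ℕ × ℕ)) =
    MeasurableSpace.generateFrom {s : Set (ℕ × ℕ) | ∃ A B : Set ℕ, s = A ×ˢ B} := by
  refine le_antisymm ?_ le_top
  intro s _
  have hrw : s = ⋃ p : s, ({(p : ℕ × ℕ).1} : Set ℕ) ×ˢ ({(p : ℕ × ℕ).2} : Set ℕ) := by
    ext q
    simp only [Set.singleton_prod_singleton, Set.mem_iUnion, Set.mem_singleton_iff]
    constructor
    · intro hq
      exact ⟨⟨q, hq⟩, rfl⟩
    · rintro ⟨p, rfl⟩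
      exact p.2
  rw [hrw]
  exact MeasurableSet.iUnion fun p =>
    MeasurableSpace.measurableSet_generateFrom ⟨_, _, rfl⟩

private lemma measurable_addNat : Measurable (fun q : ℕ × ℕ => q.1 + q.2) :=
  measurable_of_countable _

private lemma iIndep_xi (lam : Loop d → ℝ≥0) :
    iIndepFun
      (fun ω x => xiC d lam x ω) vol01 := by
  classical
  set Db : Loop d → ℝ → (ℕ → ℤ) := fun ω x n => dgt (enc d (ω, n)) x with hDb
  have hDbmeas : ∀ ω : Loop d, Measurable (Db ω) := fun ω =>
    measurable_pi_lambda _ fun n => measurable_dgt _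
  set m' : Loop d → MeasurableSpace ℝ :=
    fun ω => MeasurableSpace.comap (Db ω) MeasurableSpace.pi with hm'
  set π : Loop d → Set (Set ℝ) :=
    fun ω => {s | ∃ t ∈ seqCyl, Db ω ⁻¹' t = s} with hπ
  have hgen : ∀ ω, m' ω = MeasurableSpace.generateFrom (π ω) := by
    intro ω
    show MeasurableSpace.comap (Db ω) MeasurableSpace.pi = _
    rw [seqCyl_gen, MeasurableSpace.comap_generateFrom]
    rfl
  have hpisys : ∀ ω, IsPiSystem (π ω) := fun ω => seqCyl_pi.comap (Db ω)
  have hle : ∀ ω, m' ω ≤ (inferInstance : MeasurableSpace ℝ) := fun ω =>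
    (hDbmeas ω).comap_le
  have hindsets : iIndepSets π vol01 := by
    rw [iIndepSets_iff]
    intro S f hf
    have hex : ∀ ω ∈ S, ∃ (F : Finset ℕ) (v : ℕ → ℤ),
        f ω = {x | ∀ n ∈ F, dgt (enc d (ω, n)) x = v n} := by
      intro ω hω
      obtain ⟨t, ⟨F, v, rfl⟩, heq⟩ := hf ω hω
      exact ⟨F, v, heq.symm⟩
    choose! F v hFv using hex
    set G : Finset (Loop d × ℕ) := S.biUnion (fun ω => (F ω).image (fun n => (ω, n))) with hG
    set w : Loop d × ℕ → ℤ := fun p => v p.1 p.2 with hw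
    have hinter : ⋂ ω ∈ S, f ω = {x | ∀ p ∈ G, dgt (enc d p) x = w p} := by
      ext x
      simp only [Set.mem_iInter, Set.mem_setOf_eq, hG, Finset.mem_biUnion, Finset.mem_image]
      constructor
      · rintro h p ⟨ω, hω, n, hn, rfl⟩
        have hx := h ω hω
        rw [hFv ω hω] at hx
        exact hx n hn
      · intro h ω hω
        rw [hFv ω hω]
        intro n hn
        exact h (ω, n) ⟨ω, hω, n, hn, rfl⟩
    rw [hinter, vol_cyl G (enc d) (enc_inj.injOn) w]
    have hdisj : (↑S : Set (Loop d)).PairwiseDisjoint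
        (fun ω => (F ω).image (fun n => (ω, n))) := by
      intro a _ b _ hab
      simp only [Function.onFun, Finset.disjoint_left, Finset.mem_image]
      rintro p ⟨n, _, rfl⟩ ⟨n', _, h⟩
      exact hab (congrArg Prod.fst h).symm
    rw [Finset.prod_biUnion hdisj]
    refine Finset.prod_congr rfl fun ω hω => ?_
    have hinjn : ∀ a ∈ F ω, ∀ b ∈ F ω, (ω, a) = (ω, b) → a = b := by
      intro a _ b _ h
      exact (Prod.mk.injEq _ _ _ _).mp h |>.2
    rw [Finset.prod_image hinjn, hFv ω hω,
      vol_cyl (F ω) (fun n => enc d (ω, n))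
        (fun a _ b _ hab => (Prod.mk.injEq _ _ _ _).mp (enc_inj hab) |>.2) (v ω)]
  have hind : iIndep m' vol01 :=
    iIndepSets.iIndep (m := m') hle π hpisys hgen hindsets
  have hxmeas : ∀ ω : Loop d, @Measurable ℝ ℕ (m' ω) _ (fun x => xiC d lam x ω) := by
    intro ω
    have hDb' : @Measurable ℝ (ℕ → ℤ) (m' ω) _ (Db ω) := fun t ht =>
      MeasurableSpace.measurableSet_comap.mpr ⟨t, ht, rfl⟩
    have h1 : (fun x => xiC d lam x ω) = (qtl (lam ω)) ∘ gsum ∘ (Db ω) := rfl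
    rw [h1]
    exact ((measurable_qtl (lam ω)).comp measurable_gsum).comp hDb'
  rw [iIndepFun_iff_measure_inter_preimage_eq_mul]
  intro S sets hsets
  exact (iIndep_iff m' vol01).mp hind S fun ω hω =>
    hxmeas ω (MeasurableSpace.measurableSet_top (s := sets ω))

private lemma poisson_singleton (r : ℝ≥0) (k : ℕ) :
    poissonMeasure r {k} = ENNReal.ofReal (poissonPMFReal r k) := by
  rw [poissonMeasure_singleton]
  rfl

private lemma poisson_real_conv (a b : ℝ≥0) (k : ℕ) :
    ∑ i ∈ Finset.range (k + 1), poissonPMFReal a i * poissonPMFReal b (k - i)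
      = poissonPMFReal (a + b) k := by
  simp only [poissonPMFReal]
  push_cast
  rw [add_pow, neg_add, Real.exp_add, Finset.mul_sum, Finset.sum_div]
  refine Finset.sum_congr rfl fun i hi => ?_
  have hik : i ≤ k := by
    have := Finset.mem_range.mp hi
    omega
  have hfact := Nat.choose_mul_factorial_mul_factorial hik
  have hfactR : ((k.choose i : ℝ)) * ((Nat.factorial i : ℕ) : ℝ)
      * ((Nat.factorial (k - i) : ℕ) : ℝ) = ((Nat.factorial k : ℕ) : ℝ) := by
    exact_mod_cast congrArg (Nat.cast : ℕ → ℝ) hfact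
  have h1 : ((Nat.factorial i : ℕ) : ℝ) ≠ 0 := Nat.cast_ne_zero.mpr (Nat.factorial_ne_zero i)
  have h2 : ((Nat.factorial (k - i) : ℕ) : ℝ) ≠ 0 :=
    Nat.cast_ne_zero.mpr (Nat.factorial_ne_zero (k - i))
  have h3 : ((Nat.factorial k : ℕ) : ℝ) ≠ 0 := Nat.cast_ne_zero.mpr (Nat.factorial_ne_zero k)
  field_simp
  linear_combination (-(a : ℝ) ^ i
    * (b : ℝ) ^ (k - i)) * hfactR

private lemma poisson_conv (a b : ℝ≥0) :
    ((poissonMeasure a).prod (poissonMeasure b)).map (fun q : ℕ × ℕ => q.1 + q.2) =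
      poissonMeasure (a + b) := by
  refine meas_ext_singleton (fun k => measurableSet_singleton k) fun k => ?_
  rw [Measure.map_apply (measurable_of_countable _) (measurableSet_singleton k)]
  have hpre : (fun q : ℕ × ℕ => q.1 + q.2) ⁻¹' {k}
      = ⋃ i ∈ Finset.range (k + 1), ({((i, k - i) : ℕ × ℕ)} : Set (ℕ × ℕ)) := by
    ext q
    simp only [Set.mem_preimage, Set.mem_singleton_iff, Set.mem_iUnion, Finset.mem_range]
    constructor
    · intro h
      refine ⟨q.1, by omega, ?_⟩
      show q = (q.1, k - q.1)
      rw [Prod.ext_iff]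
      refine ⟨rfl, ?_⟩
      show q.2 = k - q.1
      omega
    · rintro ⟨i, hi, hq⟩
      have hq' : q = (i, k - i) := hq
      rw [hq']
      simp
      omega
  have hdisj : Set.PairwiseDisjoint ↑(Finset.range (k + 1))
      (fun i : ℕ => ({((i, k - i) : ℕ × ℕ)} : Set (ℕ × ℕ))) := by
    intro i _ j _ hij
    simp only [Function.onFun, Set.disjoint_singleton]
    intro hc
    exact hij (congrArg Prod.fst hc)
  rw [hpre, measure_biUnion_finset hdisj fun i _ => measurableSet_singleton _]
  have hsing : ∀ i : ℕ, ((poissonMeasure a).prod (poissonMeasure b)) {((i, k - i) : ℕ × ℕ)}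
      = ENNReal.ofReal (poissonPMFReal a i) * ENNReal.ofReal (poissonPMFReal b (k - i)) := by
    intro i
    have hs : ({((i, k - i) : ℕ × ℕ)} : Set (ℕ × ℕ)) = ({i} : Set ℕ) ×ˢ ({k - i} : Set ℕ) := by
      rw [Set.singleton_prod_singleton]
    rw [hs, Measure.prod_prod, poisson_singleton, poisson_singleton]
  rw [Finset.sum_congr rfl fun i _ => hsing i, poisson_singleton]
  rw [Finset.sum_congr rfl fun i _ =>
    (ENNReal.ofReal_mul poissonPMFReal_nonneg).symm]
  rw [← ENNReal.ofReal_sum_of_nonneg fun i _ =>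
    mul_nonneg poissonPMFReal_nonneg poissonPMFReal_nonneg]
  rw [poisson_real_conv]

/-! ### Building a bigger loop soup -/

private lemma intensity_add {α γ : ℝ} (hα : 0 ≤ α) (hγ : 0 ≤ γ) (ω : Loop d) :
    loopIntensity d α ω + loopIntensity d γ ω = loopIntensity d (α + γ) ω := by
  unfold loopIntensity
  rw [Real.toNNReal_add hα hγ]
  ring

private noncomputable def Phi (d : ℕ) (lam : Loop d → ℝ≥0) : Config d × ℝ → Config d :=
  fun p ω => p.1 ω + xiC d lam p.2 ω

private lemma measurable_Phi (lam : Loop d → ℝ≥0) : Measurable (Phi d lam) := by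
  refine measurable_pi_lambda _ fun ω => ?_
  exact ((measurable_pi_apply ω).comp measurable_fst).add
    ((measurable_xiCoord lam ω).comp measurable_snd)

private lemma soup_sum {α γ : ℝ} {P : Measure (Config d)} (hP : IsLoopSoup d α P)
    (hα : 0 ≤ α) (hγ : 0 ≤ γ) :
    IsLoopSoup d (α + γ) ((P.prod vol01).map (Phi d (loopIntensity d γ))) := by
  classical
  haveI := hP.1
  set lam : Loop d → ℝ≥0 := loopIntensity d γ with hlam
  set M : Measure (Config d × ℝ) := P.prod vol01 with hM
  have hΦ : Measurable (Phi d lam) := measurable_Phi lam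
  set pairf : Loop d → Config d × ℝ → ℕ × ℕ :=
    fun ω p => (p.1 ω, xiC d lam p.2 ω) with hpairf
  have hpairmeas : ∀ ω, Measurable (pairf ω) := fun ω =>
    ((measurable_pi_apply ω).comp measurable_fst).prodMk
      ((measurable_xiCoord lam ω).comp measurable_snd)
  refine ⟨Measure.isProbabilityMeasure_map hΦ.aemeasurable, ?_, ?_⟩
  · -- independence
    set m'' : Loop d → MeasurableSpace (Config d × ℝ) :=
      fun ω => MeasurableSpace.comap (pairf ω) ⊤ with hm''
    set π'' : Loop d → Set (Set (Config d × ℝ)) :=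
      fun ω => {s | ∃ A B : Set ℕ, s = pairf ω ⁻¹' (A ×ˢ B)} with hπ''
    have hgen : ∀ ω, m'' ω = MeasurableSpace.generateFrom (π'' ω) := by
      intro ω
      show MeasurableSpace.comap (pairf ω) ⊤ = _
      rw [rect_gen, MeasurableSpace.comap_generateFrom]
      congr 1
      ext s
      simp only [Set.mem_image, Set.mem_setOf_eq]
      constructor
      · rintro ⟨t, ⟨A, B, rfl⟩, rfl⟩
        exact ⟨A, B, rfl⟩
      · rintro ⟨A, B, rfl⟩
        exact ⟨A ×ˢ B, ⟨A, B, rfl⟩, rfl⟩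
    have hpisys : ∀ ω, IsPiSystem (π'' ω) := by
      rintro ω _ ⟨A1, B1, rfl⟩ _ ⟨A2, B2, rfl⟩ -
      exact ⟨A1 ∩ A2, B1 ∩ B2, by rw [← Set.preimage_inter, Set.prod_inter_prod]⟩
    have hle : ∀ ω, m'' ω ≤ (inferInstance : MeasurableSpace (Config d × ℝ)) := by
      intro ω
      have h' : @Measurable _ _ _ ⊤ (pairf ω) := by
        rw [← prodNat_top]
        exact hpairmeas ω
      exact h'.comap_le
    have hxind := iIndep_xi (d := d) lam
    have hindsets : iIndepSets π'' M := by
      rw [iIndepSets_iff]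
      intro S f hf
      have hex : ∀ ω ∈ S, ∃ A B : Set ℕ, f ω = pairf ω ⁻¹' (A ×ˢ B) := fun ω hω => hf ω hω
      choose! A B hAB using hex
      have hpre : ∀ ω, pairf ω ⁻¹' (A ω ×ˢ B ω)
          = ((fun η : Config d => η ω) ⁻¹' (A ω)) ×ˢ ((fun x => xiC d lam x ω) ⁻¹' (B ω)) :=
        fun ω => rfl
      have hbig : ⋂ ω ∈ S, f ω
          = (⋂ ω ∈ S, (fun η : Config d => η ω) ⁻¹' (A ω)) ×ˢ
            (⋂ ω ∈ S, (fun x => xiC d lam x ω) ⁻¹' (B ω)) := by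
        ext p
        simp only [Set.mem_iInter, Set.mem_prod]
        constructor
        · intro h
          constructor
          · intro ω hω
            have := h ω hω
            rw [hAB ω hω, hpre ω] at this
            exact this.1
          · intro ω hω
            have := h ω hω
            rw [hAB ω hω, hpre ω] at this
            exact this.2
        · rintro ⟨h1, h2⟩ ω hω
          rw [hAB ω hω, hpre ω]
          exact ⟨h1 ω hω, h2 ω hω⟩
      rw [hbig, hM, Measure.prod_prod]
      rw [hP.2.1.measure_inter_preimage_eq_mul S
        (fun ω _ => MeasurableSpace.measurableSet_top)]
      rw [hxind.measure_inter_preimage_eq_mul S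
        (fun ω _ => MeasurableSpace.measurableSet_top)]
      rw [← Finset.prod_mul_distrib]
      refine Finset.prod_congr rfl fun ω hω => ?_
      rw [hAB ω hω, hpre ω, Measure.prod_prod]
    have hindpair : iIndep m'' M :=
      iIndepSets.iIndep (m := m'') hle π'' hpisys hgen hindsets
    rw [iIndepFun_iff_measure_inter_preimage_eq_mul]
    intro S sets hsets
    have hmeasE : ∀ ω : Loop d, MeasurableSet ((fun η : Config d => η ω) ⁻¹' sets ω) :=
      fun ω => measurable_pi_apply ω MeasurableSpace.measurableSet_top
    have hmeasInter : MeasurableSet (⋂ ω ∈ S, (fun η : Config d => η ω) ⁻¹' sets ω) :=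
      MeasurableSet.biInter S.countable_toSet fun ω _ => hmeasE ω
    have hprekey : ∀ ω : Loop d, Phi d lam ⁻¹' ((fun η : Config d => η ω) ⁻¹' sets ω)
        = pairf ω ⁻¹' ((fun q : ℕ × ℕ => q.1 + q.2) ⁻¹' sets ω) := fun ω => rfl
    rw [Measure.map_apply hΦ hmeasInter, Set.preimage_iInter₂]
    have hmem'' : ∀ ω ∈ S, MeasurableSet[m'' ω]
        (pairf ω ⁻¹' ((fun q : ℕ × ℕ => q.1 + q.2) ⁻¹' sets ω)) := fun ω _ =>
      MeasurableSpace.measurableSet_comap.mpr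
        ⟨(fun q : ℕ × ℕ => q.1 + q.2) ⁻¹' sets ω, MeasurableSpace.measurableSet_top, rfl⟩
    calc M (⋂ ω ∈ S, Phi d lam ⁻¹' ((fun η : Config d => η ω) ⁻¹' sets ω))
        = M (⋂ ω ∈ S, pairf ω ⁻¹' ((fun q : ℕ × ℕ => q.1 + q.2) ⁻¹' sets ω)) := rfl
      _ = ∏ ω ∈ S, M (pairf ω ⁻¹' ((fun q : ℕ × ℕ => q.1 + q.2) ⁻¹' sets ω)) :=
          (iIndep_iff m'' M).mp hindpair S hmem''
      _ = ∏ ω ∈ S, (P.prod vol01).map (Phi d lam) ((fun η : Config d => η ω) ⁻¹' sets ω) := by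
          refine Finset.prod_congr rfl fun ω _ => ?_
          rw [Measure.map_apply hΦ (hmeasE ω)]
          rfl
  · -- marginals
    intro ω
    have h1 : (fun η : Config d => η ω) ∘ (Phi d lam)
        = (fun q : ℕ × ℕ => q.1 + q.2) ∘
          (Prod.map (fun η : Config d => η ω) (fun x => xiC d lam x ω)) := rfl
    rw [Measure.map_map (measurable_pi_apply ω) hΦ, h1,
      ← Measure.map_map measurable_addNat
        ((measurable_pi_apply ω).prodMap (measurable_xiCoord lam ω)),
      ← Measure.map_prod_map _ _ (measurable_pi_apply ω) (measurable_xiCoord lam ω),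
      hP.2.2 ω, map_xiCoord lam ω, poisson_conv, intensity_add hα hγ]

private lemma couple {P : Measure (Config d)} [IsProbabilityMeasure P]
    (lam : Loop d → ℝ≥0) (g : Config d → ℝ≥0∞) (hg : Measurable g)
    (hmono : ∀ η η' : Config d, (∀ ω, η ω ≤ η' ω) → g η ≤ g η') :
    ∫⁻ η, g η ∂P ≤ ∫⁻ η, g η ∂((P.prod vol01).map (Phi d lam)) := by
  rw [lintegral_map hg (measurable_Phi lam)]
  have h1 : ∫⁻ η, g η ∂P = ∫⁻ p, g p.1 ∂(P.prod vol01) := by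
    rw [← lintegral_map hg measurable_fst, Measure.map_fst_prod, measure_univ, one_smul]
  rw [h1]
  exact lintegral_mono fun p => hmono _ _ fun ω => Nat.le_add_right _ _

end LSP2


/-- For `d ≥ 5` and `0 < α < α_#`, the expected capacity `E_α[Cap(C_0 ∪ {0})]` is
finite and the contribution of large clusters vanishes:
`lim_{K→∞} E_α[Cap(C_0 ∪ {0}) · 1{(C_0 ∪ {0}) ∩ ∂B_K ≠ ∅}] = 0`. -/
theorem capacity_integrable (d : ℕ) (hd : 5 ≤ d) (α : ℝ) (hα : 0 < α)
    (hαs : α < alphaSharp d) (P : Measure (Config d)) (hP : IsLoopSoup d α P) :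
    (∫⁻ η, capE d (cluster η 0 ∪ {0}) ∂P) < ⊤ ∧
    Tendsto (fun K : ℕ =>
        ∫⁻ η in {η | ((cluster η 0 ∪ {0}) ∩ bdry (ball d K)).Nonempty},
          capE d (cluster η 0 ∪ {0}) ∂P)
      atTop (𝓝 0) := by
  classical
  haveI := hP.1
  -- extract a finite-expectation parameter β > α
  have hSne : {a : ℝ | 0 < a ∧ expectedClusterSize d a < ⊤}.Nonempty := by
    by_contra hne
    rw [Set.not_nonempty_iff_eq_empty] at hne
    rw [alphaSharp, hne, Real.sSup_empty] at hαs
    linarith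
  obtain ⟨β, hβS, hαβ⟩ := exists_lt_of_lt_csSup hSne hαs
  obtain ⟨hβpos, hβfin⟩ := hβS
  set γ := β - α with hγdef
  have hγ : (0:ℝ) ≤ γ := by simp [hγdef]; linarith
  -- the bigger loop soup
  set P' : Measure (Config d) := (P.prod vol01).map (Phi d (loopIntensity d γ)) with hP'def
  have hsoup' : IsLoopSoup d β P' := by
    have := soup_sum hP hα.le hγ
    rwa [show α + γ = β by rw [hγdef]; ring] at this
  -- the dominating function
  set g : Config d → ℝ≥0∞ := fun η => ((cluster η 0 ∪ {0}).encard : ℝ≥0∞) with hgdef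
  have hgmeas : Measurable g := measurable_gfun
  have hgmono : ∀ η η' : Config d, (∀ ω, η ω ≤ η' ω) → g η ≤ g η' := by
    intro η η' h
    have hsub : cluster η 0 ∪ {0} ⊆ cluster η' 0 ∪ {0} :=
      Set.union_subset_union_left _ (cluster_mono h 0)
    simp only [hgdef]
    exact ENat.toENNReal_le.mpr (Set.encard_le_encard hsub)
  -- finiteness of ∫ g
  have hgfin : ∫⁻ η, g η ∂P < ⊤ := by
    have h1 : ∫⁻ η, g η ∂P ≤ ∫⁻ η, g η ∂P' := couple _ g hgmeas hgmono
    have h2 : ∫⁻ η, g η ∂P' ≤ (∫⁻ η, ((cluster η 0).encard : ℝ≥0∞) ∂P') + 1 := by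
      have hle : ∀ η : Config d, g η ≤ ((cluster η 0).encard : ℝ≥0∞) + 1 := by
        intro η
        have h := Set.encard_union_le (cluster η 0) ({0} : Set (Zd d))
        rw [Set.encard_singleton] at h
        calc g η ≤ (((cluster η 0).encard + 1 : ℕ∞) : ℝ≥0∞) := ENat.toENNReal_le.mpr h
          _ = ((cluster η 0).encard : ℝ≥0∞) + 1 := by
              simp
      calc ∫⁻ η, g η ∂P' ≤ ∫⁻ η, (((cluster η 0).encard : ℝ≥0∞) + 1) ∂P' :=
            lintegral_mono hle
        _ = (∫⁻ η, ((cluster η 0).encard : ℝ≥0∞) ∂P') + 1 := by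
            rw [lintegral_add_right _ measurable_const]
            haveI : IsProbabilityMeasure P' := hsoup'.1
            simp
    have h3 : (∫⁻ η, ((cluster η 0).encard : ℝ≥0∞) ∂P') ≤ expectedClusterSize d β := by
      rw [expectedClusterSize]
      exact le_iSup₂_of_le P' hsoup' le_rfl
    calc ∫⁻ η, g η ∂P ≤ _ := h1
      _ ≤ _ := h2
      _ ≤ expectedClusterSize d β + 1 := by exact add_le_add_left h3 1
      _ < ⊤ := by
          rw [ENNReal.add_lt_top]
          exact ⟨hβfin, ENNReal.one_lt_top⟩
  have hcap_le : ∀ η : Config d, capE d (cluster η 0 ∪ {0}) ≤ g η := fun η =>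
    capE_le_encard _
  constructor
  · exact lt_of_le_of_lt (lintegral_mono hcap_le) hgfin
  · -- part 2 : DCT
    have hTmeas : ∀ K : ℕ, MeasurableSet {η : Config d | (K : ℝ≥0∞) ≤ g η} :=
      fun K => hgmeas measurableSet_Ici
    set F : ℕ → Config d → ℝ≥0∞ := fun K => ({η : Config d | (K : ℝ≥0∞) ≤ g η}).indicator g
      with hFdef
    have hFbound : ∀ K, F K ≤ᵐ[P] g := fun K =>
      Filter.Eventually.of_forall fun η => Set.indicator_le_self _ _ _
    have hFmeas : ∀ K, Measurable (F K) := fun K => hgmeas.indicator (hTmeas K)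
    have hlim : ∀ᵐ η ∂P, Tendsto (fun K => F K η) atTop (𝓝 0) := by
      filter_upwards [ae_lt_top hgmeas hgfin.ne] with η hη
      have : ∀ᶠ K : ℕ in atTop, F K η = 0 := by
        obtain ⟨m, hm⟩ := ENNReal.exists_nat_gt hη.ne
        filter_upwards [Filter.eventually_ge_atTop m] with K hK
        have : ¬ ((K : ℝ≥0∞) ≤ g η) := by
          push_neg
          exact lt_of_lt_of_le hm (by exact_mod_cast Nat.cast_le.mpr hK)
        simp [hFdef, Set.indicator_apply, this]
      exact tendsto_const_nhds.congr' (this.mono fun K h => h.symm)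
    have hDCT : Tendsto (fun K => ∫⁻ η, F K η ∂P) atTop (𝓝 0) := by
      have h0 : (0 : ℝ≥0∞) = ∫⁻ _, (0 : ℝ≥0∞) ∂P := by simp
      rw [h0]
      exact tendsto_lintegral_of_dominated_convergence g hFmeas hFbound hgfin.ne hlim
    refine tendsto_of_tendsto_of_tendsto_of_le_of_le tendsto_const_nhds hDCT
      (fun K => zero_le) fun K => ?_
    calc ∫⁻ η in {η | ((cluster η 0 ∪ {0}) ∩ bdry (ball d K)).Nonempty},
          capE d (cluster η 0 ∪ {0}) ∂P
        ≤ ∫⁻ η in {η | ((cluster η 0 ∪ {0}) ∩ bdry (ball d K)).Nonempty}, g η ∂P :=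
          lintegral_mono hcap_le
      _ ≤ ∫⁻ η in {η : Config d | (K : ℝ≥0∞) ≤ g η}, g η ∂P := by
          refine lintegral_mono' (Measure.restrict_mono ?_ le_rfl) le_rfl
          intro η hη
          exact key_inclusion η K hη
      _ = ∫⁻ η, F K η ∂P := by
          simp only [hFdef]
          exact (lintegral_indicator (hTmeas K) _).symm
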